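/- arXiv:2312.00704 — 2 statements merged into one kernel-verified Lean document; each statement's English description precedes it below -/
import Mathlib

section
/- For every integer k ≥ 1, every real λ > 0, and every integer n ≥ 1, the n-th factorial moment of the Poisson distribution of order k is given by the combinatorial sum M_(n)(k,λ) = n! · Σ_{(n_1,…,n_k) ∈ ℕ^k, n_1 + 2n_2 + ⋯ + k·n_k = n} ∏_{j=1}^k (λ^{n_j}/n_j!) · (C(k+1, j+1))^{n_j}. -/
open scoped BigOperators

/-- Probability mass function of the Poisson distribution of order `k` with rate `lam`:
`P_n(k,λ) = e^{-kλ} · Σ_{n₁+2n₂+⋯+k·n_k = n} ∏_{j=1}^k λ^{n_j}/n_j!`. -/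
noncomputable def poissonK (k : ℕ) (lam : ℝ) (n : ℕ) : ℝ :=
  Real.exp (-(k * lam)) *
    ∑ f ∈ Finset.filter (fun f : Fin k → ℕ => ∑ j : Fin k, (j.1 + 1) * f j = n)
        (Fintype.piFinset fun _ : Fin k => Finset.range (n + 1)),
      ∏ j : Fin k, lam ^ f j / (Nat.factorial (f j) : ℝ)

/-- The `n`-th factorial moment `M_(n)(k,λ) = Σ_{m=0}^∞ m·(m−1)⋯(m−n+1)·P_m(k,λ)`. -/
noncomputable def facMoment (k : ℕ) (lam : ℝ) (n : ℕ) : ℝ :=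
  ∑' m : ℕ, (Nat.descFactorial m n : ℝ) * poissonK k lam m

/-!
Factorial moments are Taylor coefficients of the probability generating function at `1`:
`∑ₘ C(m, i) Pₘ` is the coefficient of `uⁱ` in `G(1 + u)`. Here
`G(x) = e^{-kλ} ∏_{j=1}^k exp(λ xʲ)`, and the identity
`∑_{j=1}^k (1 + u)ʲ = k + ∑_{j=1}^k C(k+1, j+1) uʲ` turns this into
`G(1 + u) = ∏_{j=1}^k exp(λ C(k+1, j+1) uʲ)`. Expanding each exponential and collecting the
terms by total degree `n₁ + 2n₂ + ⋯ + k·n_k` reads off the coefficients of both `G(x)` and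
`G(1 + u)`; comparing the coefficients of two power series for `G(1 + u)` gives the formula.
-/

open Finset
open scoped Nat

namespace PoissonOrderK

theorem hasSum_prod_fin {α : Type*} {k : ℕ} {g : Fin k → α → ℝ} {S : Fin k → ℝ}
    (h : ∀ j, HasSum (g j) (S j)) :
    HasSum (fun f : Fin k → α => ∏ j, g j (f j)) (∏ j, S j) := by
  induction k with
  | zero => simp
  | succ k ih =>
    have habs : ∀ j, HasSum (fun t => |g j t|) (∑' t, |g j t|) :=
      fun j => (summable_abs_iff.2 (h j).summable).hasSum
    have hnorm₀ : Summable fun t => ‖g 0 t‖ := by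
      simpa only [Real.norm_eq_abs] using summable_abs_iff.2 (h 0).summable
    have hnorm : Summable fun f : Fin k → α => ‖∏ j : Fin k, g j.succ (f j)‖ := by
      simpa only [Real.norm_eq_abs, abs_prod] using (ih fun j => habs j.succ).summable
    have hpair := (h 0).mul (ih fun j => h j.succ)
      (summable_mul_of_summable_norm (f := g 0)
        (g := fun f : Fin k → α => ∏ j : Fin k, g j.succ (f j)) hnorm₀ hnorm)
    rw [Fin.prod_univ_succ]
    refine (Fin.consEquiv fun _ => α).hasSum_iff.mp ?_
    simpa [Function.comp_def, Fin.consEquiv, Fin.prod_univ_succ] using hpair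

def weight {k : ℕ} (f : Fin k → ℕ) : ℕ := ∑ j : Fin k, (j.1 + 1) * f j

def weightFiber (k m : ℕ) : Finset (Fin k → ℕ) :=
  {f ∈ Fintype.piFinset fun _ : Fin k => range (m + 1) | weight f = m}

theorem mem_weightFiber {k m : ℕ} {f : Fin k → ℕ} :
    f ∈ weightFiber k m ↔ weight f = m := by
  refine ⟨fun hf => (mem_filter.1 hf).2, fun hf => mem_filter.2 ⟨?_, hf⟩⟩
  refine Fintype.mem_piFinset.2 fun j => ?_
  rw [mem_range, Nat.lt_succ_iff, ← hf]
  calc f j ≤ (j.1 + 1) * f j := Nat.le_mul_of_pos_left _ j.1.succ_pos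
    _ ≤ weight f := single_le_sum (f := fun j : Fin k => (j.1 + 1) * f j)
      (fun _ _ => Nat.zero_le _) (mem_univ j)

theorem hasSum_sum_weightFiber {E : Type*} [NormedAddCommGroup E] [CompleteSpace E] {k : ℕ}
    {q : (Fin k → ℕ) → E} {S : E} (hq : HasSum q S) :
    HasSum (fun m => ∑ f ∈ weightFiber k m, q f) S := by
  have hfiber : ∀ m, weight ⁻¹' {m} = (weightFiber k m : Set (Fin k → ℕ)) := fun m => by
    ext f; simp [mem_weightFiber]
  convert hq.tsum_fiberwise weight with m
  rw [hfiber]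
  exact (Finset.tsum_subtype _ _).symm

noncomputable def expProdCoeff {k : ℕ} (c : Fin k → ℝ) (m : ℕ) : ℝ :=
  ∑ f ∈ weightFiber k m, ∏ j, c j ^ f j / (f j)!

theorem hasSum_expProdCoeff_mul_pow {k : ℕ} (c : Fin k → ℝ) (x : ℝ) :
    HasSum (fun m => expProdCoeff c m * x ^ m) (∏ j, Real.exp (c j * x ^ (j.1 + 1))) := by
  have hexp : ∀ j : Fin k, HasSum (fun t => (c j * x ^ (j.1 + 1)) ^ t / t !)
      (Real.exp (c j * x ^ (j.1 + 1))) :=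
    fun j => Real.exp_eq_exp_ℝ ▸ NormedSpace.expSeries_div_hasSum_exp _
  have hterm : ∀ f : Fin k → ℕ, ∏ j, (c j * x ^ (j.1 + 1)) ^ f j / (f j)! =
      (∏ j, c j ^ f j / (f j)!) * x ^ weight f := fun f => by
    rw [weight, ← prod_pow_eq_pow_sum, ← prod_mul_distrib]
    exact prod_congr rfl fun j _ => by rw [mul_pow, ← pow_mul]; ring
  refine (hasSum_sum_weightFiber (hasSum_prod_fin hexp)).congr_fun fun m => ?_
  rw [expProdCoeff, sum_mul]
  exact sum_congr rfl fun f hf => by rw [hterm, mem_weightFiber.1 hf]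

theorem hasSum_choose_mul_pow {R : Type*} [CommSemiring R] [TopologicalSpace R]
    (m : ℕ) (u : R) :
    HasSum (fun i => (m.choose i : R) * u ^ i) ((1 + u) ^ m) := by
  have hvanish : ∀ i ∉ range (m + 1), (m.choose i : R) * u ^ i = 0 := fun i hi => by
    rw [Nat.choose_eq_zero_of_lt (by simpa using hi), Nat.cast_zero, zero_mul]
  convert hasSum_sum_of_ne_finset_zero (L := .unconditional ℕ) hvanish using 1
  rw [add_comm, add_pow]
  exact sum_congr rfl fun i _ => by ring

theorem hasSum_tsum_choose_mul_mul_pow {A : ℕ → ℝ} {G : ℝ → ℝ} (hA : 0 ≤ A)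
    (hG : ∀ x, HasSum (fun m => A m * x ^ m) (G x)) (u : ℝ) :
    HasSum (fun i => (∑' m, (m.choose i : ℝ) * A m) * u ^ i) (G (1 + u)) := by
  have hrow : ∀ (v : ℝ) (m : ℕ),
      HasSum (fun i => A m * ((m.choose i : ℝ) * v ^ i)) (A m * (1 + v) ^ m) :=
    fun v m => (hasSum_choose_mul_pow m v).mul_left (A m)
  -- The rows of the absolute values sum to `A m * (1 + |v|) ^ m`, whose sum is `G (1 + |v|)`.
  have hsummable : ∀ v : ℝ,
      Summable fun p : ℕ × ℕ => A p.1 * ((p.1.choose p.2 : ℝ) * v ^ p.2) := by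
    intro v
    refine Summable.of_norm ?_
    simp only [Real.norm_eq_abs, abs_mul, abs_of_nonneg (hA _), Nat.abs_cast, abs_pow]
    refine (summable_prod_of_nonneg fun p => mul_nonneg (hA _) (by positivity)).2
      ⟨fun m => (hrow |v| m).summable, ?_⟩
    simpa only [(hrow |v| _).tsum_eq] using (hG (1 + |v|)).summable
  have htotal :
      HasSum (fun p : ℕ × ℕ => A p.1 * ((p.1.choose p.2 : ℝ) * u ^ p.2)) (G (1 + u)) :=
    (((hsummable u).hasSum.prod_fiberwise (hrow u)).unique (hG (1 + u))) ▸ (hsummable u).hasSum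
  refine ((Equiv.prodComm ℕ ℕ).hasSum_iff.2 htotal).prod_fiberwise fun i => ?_
  have hcolumn : Summable fun m => (m.choose i : ℝ) * A m := by
    simpa [mul_comm] using (hsummable 1).prod_symm.prod_factor i
  simpa [mul_comm, mul_left_comm, mul_assoc] using hcolumn.hasSum.mul_right (u ^ i)

theorem sum_range_choose_succ_mul_pow {R : Type*} [CommRing R] (n : ℕ) (u : R) :
    ∑ j ∈ range n, (n.choose (j + 1) : R) * u ^ (j + 1) = (1 + u) ^ n - 1 := by
  rw [add_comm, add_pow, sum_range_succ', eq_sub_iff_add_eq]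
  simp [mul_comm]

theorem natCast_add_sum_range_choose_mul_pow {R : Type*} [CommRing R] (k : ℕ) (u : R) :
    (k : R) + ∑ j ∈ range k, ((k + 1).choose (j + 2) : R) * u ^ (j + 1) =
      ∑ j ∈ range k, (1 + u) ^ (j + 1) := by
  induction k with
  | zero => simp
  | succ k ih =>
    have hpascal : ∀ j ∈ range (k + 1), ((k + 2).choose (j + 2) : R) * u ^ (j + 1) =
        ((k + 1).choose (j + 1) : R) * u ^ (j + 1) + ((k + 1).choose (j + 2) : R) * u ^ (j + 1) :=
      fun j _ => by rw [Nat.choose_succ_succ, Nat.cast_add, add_mul]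
    rw [sum_congr rfl hpascal, sum_add_distrib, sum_range_choose_succ_mul_pow, sum_range_succ _ k,
      Nat.choose_succ_self, sum_range_succ _ k, ← ih]
    push_cast
    ring

theorem prod_exp_mul_one_add_pow (k : ℕ) (lam u : ℝ) :
    ∏ j : Fin k, Real.exp (lam * (1 + u) ^ (j.1 + 1)) =
      Real.exp (k * lam) *
        ∏ j : Fin k, Real.exp (lam * (k + 1).choose (j.1 + 2) * u ^ (j.1 + 1)) := by
  rw [← Real.exp_sum, ← Real.exp_sum, ← Real.exp_add,
    Fin.sum_univ_eq_sum_range (fun j => lam * (1 + u) ^ (j + 1)),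
    Fin.sum_univ_eq_sum_range (fun j => lam * (k + 1).choose (j + 2) * u ^ (j + 1)),
    ← mul_sum, ← natCast_add_sum_range_choose_mul_pow, mul_add, mul_sum]
  simp only [mul_assoc, mul_comm (k : ℝ)]

theorem hasFPowerSeriesAt_ofScalars {b : ℕ → ℝ} {F : ℝ → ℝ}
    (hb : ∀ u, HasSum (fun i => b i * u ^ i) (F u)) :
    HasFPowerSeriesAt F (FormalMultilinearSeries.ofScalars ℝ b) 0 := by
  refine HasFPowerSeriesOnBall.hasFPowerSeriesAt (r := 1) ⟨?_, zero_lt_one, fun {y} _ => ?_⟩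
  · refine FormalMultilinearSeries.le_radius_of_summable_norm _ ?_
    simpa [Real.norm_eq_abs] using summable_abs_iff.2 (hb 1).summable
  · simpa [FormalMultilinearSeries.ofScalars_apply_eq, mul_comm] using hb y

theorem eq_of_hasSum_mul_pow {b d : ℕ → ℝ} {F : ℝ → ℝ}
    (hb : ∀ u, HasSum (fun i => b i * u ^ i) (F u))
    (hd : ∀ u, HasSum (fun i => d i * u ^ i) (F u)) : b = d :=
  (FormalMultilinearSeries.ofScalars_series_eq_iff (E := ℝ) b d).1
    ((hasFPowerSeriesAt_ofScalars hb).eq_formalMultilinearSeries (hasFPowerSeriesAt_ofScalars hd))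

end PoissonOrderK

open PoissonOrderK in
theorem poissonK_facMoment_eq_general (k : ℕ) (lam : ℝ) (hlam : 0 < lam) (n : ℕ) :
    facMoment k lam n = (Nat.factorial n : ℝ) *
      ∑ f ∈ Finset.filter (fun f : Fin k → ℕ => ∑ j : Fin k, (j.1 + 1) * f j = n)
          (Fintype.piFinset fun _ : Fin k => Finset.range (n + 1)),
        ∏ j : Fin k,
          lam ^ f j / (Nat.factorial (f j) : ℝ) * (Nat.choose (k + 1) (j.1 + 2) : ℝ) ^ f j := by
  set A := expProdCoeff fun _ : Fin k => lam
  set D := expProdCoeff fun j : Fin k => lam * (k + 1).choose (j.1 + 2)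
  have hA : 0 ≤ A := fun m => sum_nonneg fun f _ => prod_nonneg fun j _ => by positivity
  have hmoments : ∀ u, HasSum (fun i => (∑' m, (m.choose i : ℝ) * A m) * u ^ i)
      (∏ j : Fin k, Real.exp (lam * (1 + u) ^ (j.1 + 1))) :=
    hasSum_tsum_choose_mul_mul_pow (G := fun x => ∏ j : Fin k, Real.exp (lam * x ^ (j.1 + 1))) hA
      (hasSum_expProdCoeff_mul_pow _)
  have hshifted : ∀ u, HasSum (fun i => Real.exp (k * lam) * D i * u ^ i)
      (∏ j : Fin k, Real.exp (lam * (1 + u) ^ (j.1 + 1))) := fun u => by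
    simpa only [prod_exp_mul_one_add_pow, mul_assoc] using
      (hasSum_expProdCoeff_mul_pow (fun j : Fin k => lam * (k + 1).choose (j.1 + 2)) u).mul_left
        (Real.exp (k * lam))
  have hpoissonK : ∀ m, poissonK k lam m = Real.exp (-(k * lam)) * A m := fun m => rfl
  have hcoeff := congrFun (eq_of_hasSum_mul_pow hmoments hshifted) n
  calc facMoment k lam n = Real.exp (-(k * lam)) * n ! * ∑' m, (m.choose n : ℝ) * A m := by
        rw [facMoment, ← tsum_mul_left]
        refine tsum_congr fun m => ?_
        rw [Nat.descFactorial_eq_factorial_mul_choose, hpoissonK]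
        push_cast
        ring
    _ = n ! * D n := by
        rw [hcoeff, ← mul_assoc, mul_right_comm _ _ (Real.exp _), ← Real.exp_add]
        simp
    _ = _ := by
        congr 1
        refine sum_congr rfl fun f _ => prod_congr rfl fun j _ => ?_
        rw [mul_pow]
        ring

/-- Combinatorial sum for the factorial moments of the Poisson distribution of order `k`:
`M_(n) = n! · Σ_{n₁+2n₂+⋯+k·n_k = n} ∏_{j=1}^k (λ^{n_j}/n_j!) · C(k+1, j+1)^{n_j}`. -/
theorem poissonK_facMoment_eq (k : ℕ) (hk : 1 ≤ k) (lam : ℝ) (hlam : 0 < lam)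
    (n : ℕ) (hn : 1 ≤ n) :
    facMoment k lam n = (Nat.factorial n : ℝ) *
      ∑ f ∈ Finset.filter (fun f : Fin k → ℕ => ∑ j : Fin k, (j.1 + 1) * f j = n)
          (Fintype.piFinset fun _ : Fin k => Finset.range (n + 1)),
        ∏ j : Fin k,
          lam ^ f j / (Nat.factorial (f j) : ℝ) * (Nat.choose (k + 1) (j.1 + 2) : ℝ) ^ f j :=
  poissonK_facMoment_eq_general k lam hlam n
end

section
/- For every integer k ≥ 1 and every integer n ≥ 2, there exists a real polynomial p (depending only on n and k) such that: p has degree exactly ⌊n/2⌋, p has zero constant term, the coefficient of the linear term of p equals 𝓢_n(k), and for every real λ > 0 the n-th central moment of the Poisson distribution of order k equals p(λ). -/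
open scoped BigOperators

/-- The `n`-th central moment `M̃_n(k,λ) = Σ_{m=0}^∞ (m − μ(k,λ))^n·P_m(k,λ)`,
where `μ(k,λ) = k(k+1)λ/2` is the mean. -/
noncomputable def centralMoment (k : ℕ) (lam : ℝ) (n : ℕ) : ℝ :=
  ∑' m : ℕ, ((m : ℝ) - k * (k + 1) * lam / 2) ^ n * poissonK k lam m

/-- The power sum `𝓢_j(k) = Σ_{s=1}^k s^j`. -/
def powerSum (k j : ℕ) : ℕ := ∑ s ∈ Finset.Icc 1 k, s ^ j

/-!
The Poisson distribution of order `k` is the law of `Y = Σ_{j=1}^k j X_j` for independent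
Poisson(λ) variables `X_j`, so `Y - μ = Σ_j j (X_j - λ)`, and the moments of a sum of independent
variables are binomial convolutions of their moments. The central moments of Poisson(λ) are
polynomials `Q_r(λ)` with `Q_{r+1} = λ Σ_{i<r} C(r,i) Q_i`, which comes from
`m λ^m / m! = λ · λ^(m-1) / (m-1)!`. They have nonnegative coefficients and degree exactly
`⌊r/2⌋` (for `r ≠ 1`), no constant term and linear coefficient `1` for `r ≥ 2`. All of this
survives binomial convolution, and linear coefficients add up, so the `n`-th central moment of `Y`
has linear coefficient `Σ_j j^n`.
-/

open Polynomial Finset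

theorem Polynomial.coeff_mul_nonneg {R : Type*} [Semiring R] [PartialOrder R] [IsOrderedRing R]
    {p q : R[X]} (hp : ∀ i, 0 ≤ p.coeff i) (hq : ∀ i, 0 ≤ q.coeff i) (i : ℕ) :
    0 ≤ (p * q).coeff i := by
  rw [coeff_mul]
  exact sum_nonneg fun x _ => mul_nonneg (hp _) (hq _)

noncomputable def binomConv (a b : ℕ → ℝ[X]) (n : ℕ) : ℝ[X] :=
  ∑ i ∈ range (n + 1), n.choose i • (a i * b (n - i))

section binomConv

variable {a b : ℕ → ℝ[X]}

theorem eval_binomConv (x : ℝ) (n : ℕ) :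
    (binomConv a b n).eval x =
      ∑ i ∈ range (n + 1), n.choose i * ((a i).eval x * (b (n - i)).eval x) := by
  simp only [binomConv, eval_finsetSum, nsmul_eq_mul, eval_mul, eval_natCast]

theorem binomConv_zero (ha : a 0 = 1) (hb : b 0 = 1) : binomConv a b 0 = 1 := by
  simp [binomConv, ha, hb]

theorem coeff_binomConv_nonneg (ha : ∀ n j, 0 ≤ (a n).coeff j) (hb : ∀ n j, 0 ≤ (b n).coeff j)
    (n j : ℕ) : 0 ≤ (binomConv a b n).coeff j := by
  rw [binomConv, finsetSum_coeff]
  refine sum_nonneg fun i _ => ?_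
  rw [coeff_smul, nsmul_eq_mul]
  exact mul_nonneg (Nat.cast_nonneg _) (coeff_mul_nonneg (ha i) (hb (n - i)) j)

theorem natDegree_binomConv_le (ha : ∀ n, (a n).natDegree ≤ n / 2)
    (hb : ∀ n, (b n).natDegree ≤ n / 2) (n : ℕ) : (binomConv a b n).natDegree ≤ n / 2 := by
  refine natDegree_sum_le_of_forall_le _ _ fun i hi => ?_
  have hin : i ≤ n := Nat.lt_succ_iff.mp (mem_range.mp hi)
  calc (n.choose i • (a i * b (n - i))).natDegree
      ≤ (a i).natDegree + (b (n - i)).natDegree := (natDegree_smul_le _ _).trans natDegree_mul_le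
    _ ≤ i / 2 + (n - i) / 2 := add_le_add (ha i) (hb (n - i))
    _ ≤ n / 2 := by omega

theorem coeff_zero_binomConv (ha : ∀ n, n ≠ 0 → (a n).coeff 0 = 0)
    (hb : ∀ n, n ≠ 0 → (b n).coeff 0 = 0) {n : ℕ} (hn : n ≠ 0) :
    (binomConv a b n).coeff 0 = 0 := by
  rw [binomConv, finsetSum_coeff]
  refine sum_eq_zero fun i _ => ?_
  rw [coeff_smul, mul_coeff_zero]
  rcases Nat.eq_zero_or_pos i with rfl | hi
  · rw [Nat.sub_zero, hb n hn, mul_zero, smul_zero]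
  · rw [ha i hi.ne', zero_mul, smul_zero]

theorem coeff_one_binomConv (ha₀ : a 0 = 1) (hb₀ : b 0 = 1)
    (ha : ∀ n, n ≠ 0 → (a n).coeff 0 = 0) (hb : ∀ n, n ≠ 0 → (b n).coeff 0 = 0)
    {n : ℕ} (hn : n ≠ 0) :
    (binomConv a b n).coeff 1 = (a n).coeff 1 + (b n).coeff 1 := by
  rw [binomConv, finsetSum_coeff, sum_eq_add_of_mem n 0 (by simp) (by simp) hn]
  · simp [ha₀, hb₀]
  · rintro i hi ⟨hin, hi0⟩
    have hin' : i < n := by have := mem_range.mp hi; omega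
    rw [coeff_smul, mul_coeff_one, ha i hi0, hb (n - i) (by omega)]
    simp

theorem coeff_le_coeff_binomConv (ha : ∀ n j, 0 ≤ (a n).coeff j)
    (hb : ∀ n j, 0 ≤ (b n).coeff j) (hb₀ : b 0 = 1) (n j : ℕ) :
    (a n).coeff j ≤ (binomConv a b n).coeff j := by
  rw [binomConv, finsetSum_coeff]
  refine le_of_eq_of_le (by simp [hb₀]) (single_le_sum (f := fun i =>
    (n.choose i • (a i * b (n - i))).coeff j) (fun i _ => ?_) (self_mem_range_succ n))
  rw [coeff_smul, nsmul_eq_mul]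
  exact mul_nonneg (Nat.cast_nonneg _) (coeff_mul_nonneg (ha i) (hb (n - i)) j)

end binomConv

/-- `(poissonCentralPoly r).eval λ` is the `r`-th central moment of the Poisson(λ) distribution
(`tsum_sub_pow_mul_poissonWeight`). -/
noncomputable def poissonCentralPoly : ℕ → ℝ[X]
  | 0 => 1
  | r + 1 => X * ∑ i : Fin r, r.choose i • poissonCentralPoly i

theorem poissonCentralPoly_zero : poissonCentralPoly 0 = 1 := by
  rw [poissonCentralPoly]

theorem poissonCentralPoly_succ (r : ℕ) :
    poissonCentralPoly (r + 1) = X * ∑ i ∈ range r, r.choose i • poissonCentralPoly i := by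
  rw [poissonCentralPoly, Fin.sum_univ_eq_sum_range (fun i => r.choose i • poissonCentralPoly i)]

theorem coeff_zero_poissonCentralPoly {r : ℕ} (hr : r ≠ 0) :
    (poissonCentralPoly r).coeff 0 = 0 := by
  obtain ⟨r, rfl⟩ := Nat.exists_eq_succ_of_ne_zero hr
  rw [poissonCentralPoly_succ, coeff_X_mul_zero]

theorem coeff_succ_poissonCentralPoly (r j : ℕ) :
    (poissonCentralPoly (r + 1)).coeff (j + 1) =
      ∑ i ∈ range r, r.choose i * (poissonCentralPoly i).coeff j := by
  simp only [poissonCentralPoly_succ, coeff_X_mul, finsetSum_coeff, nsmul_eq_mul,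
    coeff_natCast_mul]

theorem coeff_poissonCentralPoly_nonneg (r j : ℕ) : 0 ≤ (poissonCentralPoly r).coeff j := by
  induction r using Nat.strong_induction_on generalizing j with
  | _ r ih =>
    rcases r with _ | r
    · rw [poissonCentralPoly_zero, coeff_one]; split_ifs <;> norm_num
    rcases j with _ | j
    · rw [coeff_zero_poissonCentralPoly r.succ_ne_zero]
    rw [coeff_succ_poissonCentralPoly]
    exact sum_nonneg fun i hi =>
      mul_nonneg (Nat.cast_nonneg _) (ih i (by have := mem_range.mp hi; omega) j)

theorem natDegree_poissonCentralPoly_le (r : ℕ) : (poissonCentralPoly r).natDegree ≤ r / 2 := by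
  induction r using Nat.strong_induction_on with
  | _ r ih =>
    rcases r with _ | r
    · simp [poissonCentralPoly_zero]
    refine natDegree_le_iff_coeff_eq_zero.mpr fun j hj => ?_
    obtain ⟨j, rfl⟩ : ∃ j', j = j' + 1 := ⟨j - 1, by omega⟩
    rw [coeff_succ_poissonCentralPoly]
    refine sum_eq_zero fun i hi => ?_
    have := mem_range.mp hi
    rw [coeff_eq_zero_of_natDegree_lt ((ih i (by omega)).trans_lt (by omega)), mul_zero]

theorem coeff_one_poissonCentralPoly {r : ℕ} (hr : 2 ≤ r) : (poissonCentralPoly r).coeff 1 = 1 := by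
  obtain ⟨r, rfl⟩ : ∃ s, r = s + 1 := ⟨r - 1, by omega⟩
  rw [coeff_succ_poissonCentralPoly, sum_eq_single_of_mem 0 (by simp; omega)]
  · simp [poissonCentralPoly_zero]
  · intro i _ hi
    rw [coeff_zero_poissonCentralPoly hi, mul_zero]

theorem coeff_half_poissonCentralPoly_pos {r : ℕ} (hr : r ≠ 1) :
    0 < (poissonCentralPoly r).coeff (r / 2) := by
  induction r using Nat.strong_induction_on with
  | _ r ih =>
    rcases r with _ | r
    · simp [poissonCentralPoly_zero]
    obtain ⟨d, hd⟩ : ∃ d, (r + 1) / 2 = d + 1 := ⟨(r + 1) / 2 - 1, by omega⟩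
    -- the term `i = r - 1` (or `i = 0` when `r = 2`) of the recursion already reaches degree `d`
    obtain ⟨i, hir, hi1, hid⟩ : ∃ i < r, i ≠ 1 ∧ i / 2 = d :=
      if h : r = 2 then ⟨0, by omega, by omega, by omega⟩ else ⟨r - 1, by omega, by omega, by omega⟩
    rw [hd, coeff_succ_poissonCentralPoly]
    calc (0 : ℝ) < r.choose i * (poissonCentralPoly i).coeff d := by
          rw [← hid]
          exact mul_pos (by exact_mod_cast Nat.choose_pos hir.le) (ih i (by omega) hi1)
      _ ≤ _ := single_le_sum (f := fun i => r.choose i * (poissonCentralPoly i).coeff d)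
          (fun i _ => mul_nonneg (Nat.cast_nonneg _) (coeff_poissonCentralPoly_nonneg i d))
          (mem_range.mpr hir)

theorem powerSum_succ (k n : ℕ) : powerSum (k + 1) n = powerSum k n + (k + 1) ^ n :=
  sum_Icc_succ_top (by omega) _

/-- `(poissonKCentralPoly k n).eval λ` is the `n`-th moment of `Σ_{j<k} (j+1)(X_j - λ)` for
independent Poisson(λ) variables `X_j`; the summand `(j+1)(X_j - λ)` has moments
`(j+1)^i • poissonCentralPoly i`. -/
noncomputable def poissonKCentralPoly : ℕ → ℕ → ℝ[X]
  | 0, n => 0 ^ n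
  | k + 1, n => binomConv (fun i => (k + 1) ^ i • poissonCentralPoly i) (poissonKCentralPoly k) n

section poissonKCentralPoly

variable (k : ℕ)

theorem poissonKCentralPoly_zero_left (n : ℕ) : poissonKCentralPoly 0 n = 0 ^ n := by
  rw [poissonKCentralPoly]

theorem poissonKCentralPoly_succ (n : ℕ) :
    poissonKCentralPoly (k + 1) n =
      binomConv (fun i => (k + 1) ^ i • poissonCentralPoly i) (poissonKCentralPoly k) n := by
  rw [poissonKCentralPoly]

theorem poissonKCentralPoly_zero_right : poissonKCentralPoly k 0 = 1 := by
  induction k with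
  | zero => rw [poissonKCentralPoly_zero_left, pow_zero]
  | succ k ih =>
    rw [poissonKCentralPoly_succ, binomConv_zero (by simp [poissonCentralPoly_zero]) ih]

theorem coeff_zero_poissonKCentralPoly {n : ℕ} (hn : n ≠ 0) :
    (poissonKCentralPoly k n).coeff 0 = 0 := by
  induction k generalizing n with
  | zero => simp [poissonKCentralPoly_zero_left, zero_pow hn]
  | succ k ih =>
    rw [poissonKCentralPoly_succ]
    refine coeff_zero_binomConv (fun i hi => ?_) (fun i hi => ih hi) hn
    rw [coeff_smul, coeff_zero_poissonCentralPoly hi, smul_zero]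

theorem coeff_poissonKCentralPoly_nonneg (n j : ℕ) : 0 ≤ (poissonKCentralPoly k n).coeff j := by
  induction k generalizing n j with
  | zero =>
    rcases n with _ | n
    · rw [poissonKCentralPoly_zero_left, pow_zero, coeff_one]; split_ifs <;> norm_num
    · simp [poissonKCentralPoly_zero_left]
  | succ k ih =>
    rw [poissonKCentralPoly_succ]
    refine coeff_binomConv_nonneg (fun i j => ?_) ih n j
    rw [coeff_smul, nsmul_eq_mul]
    exact mul_nonneg (Nat.cast_nonneg _) (coeff_poissonCentralPoly_nonneg i j)

theorem natDegree_poissonKCentralPoly_le (n : ℕ) : (poissonKCentralPoly k n).natDegree ≤ n / 2 := by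
  induction k generalizing n with
  | zero =>
    rcases n with _ | n <;> simp [poissonKCentralPoly_zero_left]
  | succ k ih =>
    rw [poissonKCentralPoly_succ]
    exact natDegree_binomConv_le
      (fun i => (natDegree_smul_le _ _).trans (natDegree_poissonCentralPoly_le i)) ih n

theorem coeff_one_poissonKCentralPoly {n : ℕ} (hn : 2 ≤ n) :
    (poissonKCentralPoly k n).coeff 1 = powerSum k n := by
  induction k with
  | zero => simp [poissonKCentralPoly_zero_left, powerSum, zero_pow (by omega : n ≠ 0)]
  | succ k ih =>
    rw [poissonKCentralPoly_succ, coeff_one_binomConv (by simp [poissonCentralPoly_zero])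
      (poissonKCentralPoly_zero_right k) (fun i hi => by
        rw [coeff_smul, coeff_zero_poissonCentralPoly hi, smul_zero])
      (fun i hi => coeff_zero_poissonKCentralPoly k hi) (by omega),
      coeff_smul, coeff_one_poissonCentralPoly hn, ih, powerSum_succ]
    push_cast
    ring

theorem coeff_half_poissonKCentralPoly_pos (hk : k ≠ 0) {n : ℕ} (hn : 2 ≤ n) :
    0 < (poissonKCentralPoly k n).coeff (n / 2) := by
  obtain ⟨k, rfl⟩ := Nat.exists_eq_succ_of_ne_zero hk
  rw [poissonKCentralPoly_succ]
  refine lt_of_lt_of_le ?_ (coeff_le_coeff_binomConv (fun i j => ?_)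
    (coeff_poissonKCentralPoly_nonneg k) (poissonKCentralPoly_zero_right k) n (n / 2))
  all_goals rw [coeff_smul, nsmul_eq_mul]
  · exact mul_pos (by positivity) (coeff_half_poissonCentralPoly_pos (by omega))
  · exact mul_nonneg (Nat.cast_nonneg _) (coeff_poissonCentralPoly_nonneg i j)

end poissonKCentralPoly

noncomputable def poissonWeight (lam : ℝ) (m : ℕ) : ℝ := lam ^ m / m.factorial

section poissonWeight

variable (lam : ℝ)

theorem tsum_poissonWeight : ∑' m, poissonWeight lam m = Real.exp lam := by
  rw [Real.exp_eq_exp_ℝ, NormedSpace.exp_eq_tsum_div]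
  rfl

theorem succ_mul_poissonWeight_succ (m : ℕ) :
    ((m : ℝ) + 1) * poissonWeight lam (m + 1) = lam * poissonWeight lam m := by
  have : ((m : ℝ) + 1) ≠ 0 := by positivity
  simp only [poissonWeight, Nat.factorial_succ, Nat.cast_mul, Nat.cast_succ, pow_succ]
  field_simp

theorem summable_norm_sub_pow_mul_poissonWeight (c : ℝ) (r : ℕ) :
    Summable fun m : ℕ => ‖((m : ℝ) - c) ^ r * poissonWeight lam m‖ := by
  -- `|m - c| ≤ (1 + |c|) 2^m` turns the terms into those of an exponential series
  have hbound (m : ℕ) : |(m : ℝ) - c| ≤ (1 + |c|) * 2 ^ m := by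
    have hm : (m : ℝ) ≤ 2 ^ m := by exact_mod_cast Nat.lt_two_pow_self.le
    have h1 : (1 : ℝ) ≤ 2 ^ m := one_le_pow₀ (by norm_num)
    calc |(m : ℝ) - c| ≤ m + |c| := (abs_sub _ _).trans (by rw [Nat.abs_cast])
      _ ≤ 2 ^ m + |c| * 2 ^ m := by nlinarith [abs_nonneg c]
      _ = _ := by ring
  refine Summable.of_nonneg_of_le (fun _ => norm_nonneg _) (fun m => ?_)
    ((Real.summable_pow_div_factorial (2 ^ r * |lam|)).mul_left ((1 + |c|) ^ r))
  calc ‖((m : ℝ) - c) ^ r * poissonWeight lam m‖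
        = |(m : ℝ) - c| ^ r * (|lam| ^ m / m.factorial) := by
        rw [norm_mul, norm_pow, Real.norm_eq_abs, poissonWeight, norm_div, norm_pow,
          Real.norm_eq_abs, RCLike.norm_natCast]
    _ ≤ ((1 + |c|) * 2 ^ m) ^ r * (|lam| ^ m / m.factorial) := by gcongr; exact hbound m
    _ = (1 + |c|) ^ r * ((2 ^ r * |lam|) ^ m / m.factorial) := by
        rw [mul_pow, ← pow_mul, mul_comm m r, pow_mul]; ring

theorem summable_sub_pow_mul_poissonWeight (c : ℝ) (r : ℕ) :
    Summable fun m : ℕ => ((m : ℝ) - c) ^ r * poissonWeight lam m :=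
  (summable_norm_sub_pow_mul_poissonWeight lam c r).of_norm

theorem tsum_mul_natCast_mul_poissonWeight {g : ℕ → ℝ}
    (hg : Summable fun m => g (m + 1) * poissonWeight lam m) :
    ∑' m : ℕ, g m * (m * poissonWeight lam m) =
      lam * ∑' m : ℕ, g (m + 1) * poissonWeight lam m := by
  have hshift (m : ℕ) :
      g (m + 1) * (((m + 1 : ℕ) : ℝ) * poissonWeight lam (m + 1)) =
        lam * (g (m + 1) * poissonWeight lam m) := by
    rw [Nat.cast_succ, succ_mul_poissonWeight_succ]; ring
  rw [tsum_eq_zero_add' (by simpa only [hshift] using hg.mul_left lam)]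
  simp only [hshift, Nat.cast_zero, zero_mul, mul_zero, zero_add, tsum_mul_left]

theorem tsum_sub_pow_succ_mul_poissonWeight (r : ℕ) :
    ∑' m : ℕ, ((m : ℝ) - lam) ^ (r + 1) * poissonWeight lam m =
      lam * ∑ i ∈ range r, r.choose i * ∑' m : ℕ, ((m : ℝ) - lam) ^ i * poissonWeight lam m := by
  set M := fun i => ∑' m : ℕ, ((m : ℝ) - lam) ^ i * poissonWeight lam m with hM
  have hsplit : ∑' m : ℕ, ((m : ℝ) - lam) ^ r * (m * poissonWeight lam m) =
      M (r + 1) + lam * M r := by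
    rw [hM, ← tsum_mul_left, ← (summable_sub_pow_mul_poissonWeight lam lam (r + 1)).tsum_add
      ((summable_sub_pow_mul_poissonWeight lam lam r).mul_left lam)]
    exact tsum_congr fun m => by ring
  have hbinom (m : ℕ) : (((m + 1 : ℕ) : ℝ) - lam) ^ r * poissonWeight lam m =
      ∑ i ∈ range (r + 1), r.choose i * (((m : ℝ) - lam) ^ i * poissonWeight lam m) := by
    rw [Nat.cast_succ, add_sub_right_comm, add_pow, sum_mul]
    exact sum_congr rfl fun i _ => by ring
  have hshift : ∑' m : ℕ, ((m : ℝ) - lam) ^ r * (m * poissonWeight lam m) =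
      lam * ∑ i ∈ range (r + 1), r.choose i * M i := by
    rw [tsum_mul_natCast_mul_poissonWeight lam (g := fun m => ((m : ℝ) - lam) ^ r)
      ((summable_sub_pow_mul_poissonWeight lam (lam - 1) r).congr fun m => by
        rw [Nat.cast_succ, sub_sub_eq_add_sub])]
    simp only [hbinom, hM]
    rw [Summable.tsum_finsetSum fun i _ =>
      (summable_sub_pow_mul_poissonWeight lam lam i).mul_left _]
    simp only [tsum_mul_left]
  rw [sum_range_succ, Nat.choose_self, Nat.cast_one, one_mul] at hshift
  linear_combination hshift - hsplit

theorem tsum_sub_pow_mul_poissonWeight (r : ℕ) :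
    ∑' m : ℕ, ((m : ℝ) - lam) ^ r * poissonWeight lam m =
      Real.exp lam * (poissonCentralPoly r).eval lam := by
  induction r using Nat.strong_induction_on with
  | _ r ih =>
    rcases r with _ | r
    · simp [tsum_poissonWeight, poissonCentralPoly_zero]
    rw [tsum_sub_pow_succ_mul_poissonWeight, poissonCentralPoly_succ, eval_mul, eval_X,
      eval_finsetSum, mul_sum, mul_sum, mul_sum]
    refine sum_congr rfl fun i hi => ?_
    rw [ih i (by have := mem_range.mp hi; omega), eval_smul, nsmul_eq_mul]
    ring

end poissonWeight

theorem Fin.snocEquiv_const_apply {α : Type*} {k : ℕ} (x : α × (Fin k → α)) :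
    Fin.snocEquiv (fun _ => α) x = Fin.snoc x.2 x.1 :=
  rfl

section ProductMoments

variable {α β : Type*} {A P : α → ℝ} {B Q : β → ℝ}

theorem add_pow_mul_mul_eq_sum (n : ℕ) (x : α × β) :
    (A x.1 + B x.2) ^ n * (P x.1 * Q x.2) =
      ∑ i ∈ range (n + 1), n.choose i * ((A x.1 ^ i * P x.1) * (B x.2 ^ (n - i) * Q x.2)) := by
  rw [add_pow, sum_mul]
  exact sum_congr rfl fun i _ => by ring

theorem summable_norm_add_pow_mul_mul (hA : ∀ i, Summable fun a => ‖A a ^ i * P a‖)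
    (hB : ∀ i, Summable fun b => ‖B b ^ i * Q b‖) (n : ℕ) :
    Summable fun x : α × β => ‖(A x.1 + B x.2) ^ n * (P x.1 * Q x.2)‖ := by
  simp only [add_pow_mul_mul_eq_sum]
  refine Summable.of_nonneg_of_le (fun _ => norm_nonneg _) (fun x => norm_sum_le _ _)
    (summable_sum fun i _ => ?_)
  exact (((hA i).mul_norm (hB (n - i))).mul_left (n.choose i : ℝ)).congr fun x => by
    simp only [norm_mul, RCLike.norm_natCast]

theorem tsum_add_pow_mul_mul (hA : ∀ i, Summable fun a => ‖A a ^ i * P a‖)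
    (hB : ∀ i, Summable fun b => ‖B b ^ i * Q b‖) (n : ℕ) :
    ∑' x : α × β, (A x.1 + B x.2) ^ n * (P x.1 * Q x.2) =
      ∑ i ∈ range (n + 1),
        n.choose i * ((∑' a, A a ^ i * P a) * ∑' b, B b ^ (n - i) * Q b) := by
  simp only [add_pow_mul_mul_eq_sum]
  rw [Summable.tsum_finsetSum fun i _ =>
    (summable_mul_of_summable_norm (hA i) (hB (n - i))).mul_left _]
  exact sum_congr rfl fun i _ => by
    rw [tsum_mul_left, tsum_mul_tsum_of_summable_norm (hA i) (hB (n - i))]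

end ProductMoments

def weightedSum {k : ℕ} (f : Fin k → ℕ) : ℕ := ∑ j : Fin k, (j.1 + 1) * f j

noncomputable def poissonWeightPi (lam : ℝ) {k : ℕ} (f : Fin k → ℕ) : ℝ :=
  ∏ j, poissonWeight lam (f j)

noncomputable def centeredWeightedSum (lam : ℝ) {k : ℕ} (f : Fin k → ℕ) : ℝ :=
  ∑ j : Fin k, ((j : ℝ) + 1) * (f j - lam)

section WeightedSum

variable (lam : ℝ) {k : ℕ}

theorem poissonWeightPi_snoc (g : Fin k → ℕ) (m : ℕ) :
    poissonWeightPi lam (Fin.snoc g m : Fin (k + 1) → ℕ) =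
      poissonWeight lam m * poissonWeightPi lam g := by
  simp [poissonWeightPi, Fin.prod_univ_castSucc, mul_comm]

theorem centeredWeightedSum_snoc (g : Fin k → ℕ) (m : ℕ) :
    centeredWeightedSum lam (Fin.snoc g m : Fin (k + 1) → ℕ) =
      (k + 1) * (m - lam) + centeredWeightedSum lam g := by
  simp [centeredWeightedSum, Fin.sum_univ_castSucc, add_comm]

theorem summable_norm_mul_sub_pow_mul_poissonWeight (a : ℝ) (i : ℕ) :
    Summable fun m : ℕ => ‖(a * ((m : ℝ) - lam)) ^ i * poissonWeight lam m‖ :=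
  ((summable_norm_sub_pow_mul_poissonWeight lam lam i).mul_left (|a| ^ i)).congr fun m => by
    simp only [mul_pow, norm_mul, norm_pow, Real.norm_eq_abs]
    ring

theorem tsum_mul_sub_pow_mul_poissonWeight (a : ℝ) (i : ℕ) :
    ∑' m : ℕ, (a * ((m : ℝ) - lam)) ^ i * poissonWeight lam m =
      a ^ i * (Real.exp lam * (poissonCentralPoly i).eval lam) := by
  simp only [mul_pow, mul_assoc]
  rw [tsum_mul_left, tsum_sub_pow_mul_poissonWeight]

theorem summable_norm_centeredWeightedSum_pow_mul (k n : ℕ) :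
    Summable fun f : Fin k → ℕ => ‖centeredWeightedSum lam f ^ n * poissonWeightPi lam f‖ := by
  induction k generalizing n with
  | zero => exact Summable.of_finite
  | succ k ih =>
    rw [← (Fin.snocEquiv fun _ => ℕ).summable_iff]
    simpa only [Function.comp_def, Fin.snocEquiv_const_apply, centeredWeightedSum_snoc,
      poissonWeightPi_snoc] using
      summable_norm_add_pow_mul_mul (summable_norm_mul_sub_pow_mul_poissonWeight lam (k + 1)) ih n

theorem tsum_centeredWeightedSum_pow_mul (k n : ℕ) :
    ∑' f : Fin k → ℕ, centeredWeightedSum lam f ^ n * poissonWeightPi lam f =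
      Real.exp (k * lam) * (poissonKCentralPoly k n).eval lam := by
  induction k generalizing n with
  | zero => simp [centeredWeightedSum, poissonWeightPi, poissonKCentralPoly_zero_left]
  | succ k ih =>
    rw [← (Fin.snocEquiv fun _ => ℕ).tsum_eq]
    simp only [Fin.snocEquiv_const_apply, centeredWeightedSum_snoc, poissonWeightPi_snoc]
    rw [tsum_add_pow_mul_mul (summable_norm_mul_sub_pow_mul_poissonWeight lam (k + 1))
      (summable_norm_centeredWeightedSum_pow_mul lam k), poissonKCentralPoly_succ,
      eval_binomConv, mul_sum]
    refine sum_congr rfl fun i _ => ?_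
    rw [tsum_mul_sub_pow_mul_poissonWeight, ih, eval_smul, nsmul_eq_mul, Nat.cast_succ, add_mul,
      one_mul, Real.exp_add]
    push_cast
    ring

end WeightedSum

theorem weightedSum_preimage_singleton (k m : ℕ) :
    (weightedSum : (Fin k → ℕ) → ℕ) ⁻¹' {m} =
      ↑(filter (fun f : Fin k → ℕ => ∑ j : Fin k, (j.1 + 1) * f j = m)
        (Fintype.piFinset fun _ : Fin k => range (m + 1))) := by
  ext f
  simp only [Set.mem_preimage, Set.mem_singleton_iff, coe_filter, Fintype.mem_piFinset, mem_range,
    Set.mem_ofPred_eq, weightedSum]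
  refine ⟨fun h => ⟨fun j => ?_, h⟩, fun h => h.2⟩
  have := single_le_sum (f := fun j : Fin k => (j.1 + 1) * f j) (fun _ _ => Nat.zero_le _)
    (mem_univ j)
  nlinarith

theorem poissonK_eq_tsum (k : ℕ) (lam : ℝ) (m : ℕ) :
    poissonK k lam m =
      Real.exp (-(k * lam)) * ∑' f : weightedSum (k := k) ⁻¹' {m}, poissonWeightPi lam f.1 := by
  rw [weightedSum_preimage_singleton, Finset.tsum_subtype']
  rfl

theorem centeredWeightedSum_eq {k : ℕ} (lam : ℝ) (f : Fin k → ℕ) :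
    centeredWeightedSum lam f = weightedSum f - k * (k + 1) * lam / 2 := by
  have hgauss : ∑ j : Fin k, ((j : ℝ) + 1) = k * (k + 1) / 2 := by
    clear f
    rw [Fin.sum_univ_eq_sum_range (fun i => (i : ℝ) + 1)]
    induction k with
    | zero => simp
    | succ k ih => rw [sum_range_succ, ih]; push_cast; ring
  simp only [centeredWeightedSum, weightedSum, mul_sub, sum_sub_distrib, ← sum_mul, hgauss]
  push_cast
  ring

theorem centralMoment_eq_tsum (k : ℕ) (lam : ℝ) (n : ℕ) :
    centralMoment k lam n = Real.exp (-(k * lam)) *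
      ∑' f : Fin k → ℕ, centeredWeightedSum lam f ^ n * poissonWeightPi lam f := by
  have hfib := (summable_norm_centeredWeightedSum_pow_mul lam k n).of_norm.hasSum.tsum_fiberwise
    weightedSum
  rw [centralMoment, ← hfib.tsum_eq, ← tsum_mul_left]
  refine tsum_congr fun m => ?_
  rw [poissonK_eq_tsum, mul_left_comm, ← tsum_mul_left]
  congr 1
  refine tsum_congr fun f => ?_
  rw [centeredWeightedSum_eq, show weightedSum f.1 = m from f.2]

/-- For `n ≥ 2`, the `n`-th central moment of the Poisson distribution of order `k` is a
polynomial in `λ` of degree exactly `⌊n/2⌋`, with zero constant term, whose linear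
coefficient equals `𝓢_n(k)`. -/
theorem poissonK_centralMoment_polynomial (k : ℕ) (hk : 1 ≤ k) (n : ℕ) (hn : 2 ≤ n) :
    ∃ p : Polynomial ℝ,
      p.natDegree = n / 2 ∧
      p.coeff 0 = 0 ∧
      p.coeff 1 = (powerSum k n : ℝ) ∧
      ∀ lam : ℝ, 0 < lam → centralMoment k lam n = p.eval lam := by
  refine ⟨poissonKCentralPoly k n, ?_, coeff_zero_poissonKCentralPoly k (by omega),
    coeff_one_poissonKCentralPoly k hn, fun lam _ => ?_⟩
  · exact natDegree_eq_of_le_of_coeff_ne_zero (natDegree_poissonKCentralPoly_le k n)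
      (coeff_half_poissonKCentralPoly_pos k (by omega) hn).ne'
  · rw [centralMoment_eq_tsum, tsum_centeredWeightedSum_pow_mul, ← mul_assoc, ← Real.exp_add,
      neg_add_cancel, Real.exp_zero, one_mul]
end
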